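/- Let f : ℝ × ℝ → ℝ be in FFN(ReLU, H) and let Ω ⊂ ℝ be finite. Then there exist S ∈ ℝ, M ∈ ℝ, and a relation ≈ which is either ≤ or ≥, such that for all y, y' ∈ Ω and all x, x' ≥ S: either f(·, y) is constant on [S, ∞), or (x' ≈ x + M implies f(x, y) ≤ f(x', y')). -/

import Mathlib

/-!
Every coordinate of a network in `FFN(ReLU, H)` is, for each fixed `y`, eventually affine in `x`
with a slope that does not depend on `y`: an affine layer mixes affine functions, and far enough
out `ReLU` and `H` see only the sign of the slope of their argument (`H` turns every slope
into `0`). On a finite `Ω` this gives `f x y = α x + β y` for all large `x`. If `α = 0`, each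
`f (·, y)` is eventually constant; otherwise a shift `M = D / α`, with `D` bounding the
differences `β y - β y'`, compensates for changing `y`, and the sign of `α` decides whether the
shift has to be taken to the right (`≥`) or to the left (`≤`).
-/

/-- The class `FFN(ReLU, H)` of functions `ℝ × ℝ → ℝ^d`: built from the two inputs by
finitely many compositions of affine maps with rational coefficients and coordinate-wise
applications of `ReLU` and the Heaviside function `H`. -/
inductive FFNReLUH2 : {d : ℕ} → (ℝ → ℝ → (Fin d → ℝ)) → Prop
  | input : FFNReLUH2 (d := 2) (fun x y => ![x, y])
  | affine {d e : ℕ} (A : Fin e → Fin d → ℚ) (b : Fin e → ℚ) {f : ℝ → ℝ → (Fin d → ℝ)} :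
      FFNReLUH2 f →
      FFNReLUH2 (d := e) (fun x y i => (∑ j, (A i j : ℝ) * f x y j) + (b i : ℝ))
  | relu {d : ℕ} {f : ℝ → ℝ → (Fin d → ℝ)} :
      FFNReLUH2 f → FFNReLUH2 (fun x y i => max (f x y i) 0)
  | heaviside {d : ℕ} {f : ℝ → ℝ → (Fin d → ℝ)} :
      FFNReLUH2 f → FFNReLUH2 (fun x y i => if 0 ≤ f x y i then (1 : ℝ) else 0)

open Filter

section EventualSign

variable {𝕜 : Type*} [Field 𝕜] [LinearOrder 𝕜] [IsStrictOrderedRing 𝕜]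

lemma eventually_pos_affine_of_pos {a : 𝕜} (b : 𝕜) (ha : 0 < a) :
    ∀ᶠ x in atTop, 0 < a * x + b :=
  (tendsto_atTop_add_const_right _ b (tendsto_id.const_mul_atTop ha)).eventually_gt_atTop 0

lemma eventually_neg_affine_of_neg {a : 𝕜} (b : 𝕜) (ha : a < 0) :
    ∀ᶠ x in atTop, a * x + b < 0 :=
  (tendsto_atBot_add_const_right _ b (tendsto_id.const_mul_atTop_of_neg ha)).eventually_lt_atBot 0

lemma exists_eventually_max_affine_zero_eq (a b : 𝕜) :
    ∃ c, ∀ᶠ x in atTop, max (a * x + b) 0 = max a 0 * x + c := by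
  rcases lt_trichotomy a 0 with ha | rfl | ha
  · refine ⟨0, (eventually_neg_affine_of_neg b ha).mono fun x hx => ?_⟩
    simp [max_eq_right hx.le, max_eq_right ha.le]
  · exact ⟨max b 0, by simp⟩
  · refine ⟨b, (eventually_pos_affine_of_pos b ha).mono fun x hx => ?_⟩
    simp [max_eq_left hx.le, max_eq_left ha.le]

lemma exists_eventually_heaviside_affine_eq (a b : 𝕜) :
    ∃ c : 𝕜, ∀ᶠ x in atTop, (if 0 ≤ a * x + b then (1 : 𝕜) else 0) = c := by
  rcases lt_trichotomy a 0 with ha | rfl | ha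
  · exact ⟨0, (eventually_neg_affine_of_neg b ha).mono fun x hx => if_neg hx.not_ge⟩
  · exact ⟨if 0 ≤ b then 1 else 0, by simp⟩
  · exact ⟨1, (eventually_pos_affine_of_pos b ha).mono fun x hx => if_pos hx.le⟩

end EventualSign

theorem FFNReLUH2.exists_eventually_affine {d : ℕ} {f : ℝ → ℝ → (Fin d → ℝ)}
    (hf : FFNReLUH2 f) :
    ∃ a : Fin d → ℝ, ∀ y, ∃ b : Fin d → ℝ, ∀ᶠ x in atTop, ∀ i, f x y i = a i * x + b i := by
  induction hf with
  | input =>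
    refine ⟨![1, 0], fun y => ⟨![0, y], Eventually.of_forall fun x i => ?_⟩⟩
    fin_cases i <;> simp
  | affine A c _ ih =>
    obtain ⟨a, ha⟩ := ih
    refine ⟨fun i => ∑ j, (A i j : ℝ) * a j, fun y => ?_⟩
    obtain ⟨b, hb⟩ := ha y
    refine ⟨fun i => (∑ j, (A i j : ℝ) * b j) + c i, hb.mono fun x hx i => ?_⟩
    simp only [hx, mul_add, Finset.sum_add_distrib, Finset.sum_mul, mul_assoc]
    ring
  | relu _ ih =>
    obtain ⟨a, ha⟩ := ih
    refine ⟨fun i => max (a i) 0, fun y => ?_⟩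
    obtain ⟨b, hb⟩ := ha y
    choose c hc using fun i => exists_eventually_max_affine_zero_eq (a i) (b i)
    refine ⟨c, ?_⟩
    filter_upwards [hb, eventually_all.2 hc] with x hx hcx i
    rw [hx i, hcx i]
  | heaviside _ ih =>
    obtain ⟨a, ha⟩ := ih
    refine ⟨0, fun y => ?_⟩
    obtain ⟨b, hb⟩ := ha y
    choose c hc using fun i => exists_eventually_heaviside_affine_eq (a i) (b i)
    refine ⟨c, ?_⟩
    filter_upwards [hb, eventually_all.2 hc] with x hx hcx i
    simp [hx i, hcx i]

lemma Finset.exists_forall_sub_le {ι G : Type*} [AddCommGroup G] [LinearOrder G]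
    [IsOrderedAddMonoid G] (s : Finset ι) (g : ι → G) :
    ∃ D, ∀ i ∈ s, ∀ j ∈ s, g i - g j ≤ D := by
  obtain ⟨D, hD⟩ := ((s ×ˢ s).image fun p => g p.1 - g p.2).exists_le
  exact ⟨D, fun i hi j hj => hD _ (mem_image.2 ⟨(i, j), mem_product.2 ⟨hi, hj⟩, rfl⟩)⟩

lemma rel_mul_le_mul_eq_le_or_ge {𝕜 : Type*} [Field 𝕜] [LinearOrder 𝕜] [IsStrictOrderedRing 𝕜]
    {α : 𝕜} (hα : α ≠ 0) :
    (fun u v : 𝕜 => α * v ≤ α * u) = (· ≤ ·) ∨ (fun u v : 𝕜 => α * v ≤ α * u) = (· ≥ ·) := by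
  rcases hα.lt_or_gt with hα | hα
  · exact Or.inl (funext₂ fun _ _ => propext (mul_le_mul_left_of_neg hα))
  · exact Or.inr (funext₂ fun _ _ => propext (mul_le_mul_iff_right₀ hα))

/-- For `f : ℝ × ℝ → ℝ` in `FFN(ReLU, H)` and a finite set `Ω ⊂ ℝ` there are `S, M ∈ ℝ`
and a relation `≈` (either `≤` or `≥`) such that for all `y, y' ∈ Ω` and `x, x' ≥ S`:
either `f (·, y)` is constant on `[S, ∞)`, or `x' ≈ x + M` implies `f (x, y) ≤ f (x', y')`. -/
theorem ffnReLUH_collision_lemma (f : ℝ → ℝ → ℝ)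
    (hf : FFNReLUH2 (d := 1) (fun x y _ => f x y)) (Ω : Finset ℝ) :
    ∃ (S M : ℝ) (r : ℝ → ℝ → Prop), (r = (· ≤ ·) ∨ r = (· ≥ ·)) ∧
      ∀ y ∈ Ω, ∀ y' ∈ Ω, ∀ x x' : ℝ, S ≤ x → S ≤ x' →
        ((∀ x₁ x₂ : ℝ, S ≤ x₁ → S ≤ x₂ → f x₁ y = f x₂ y) ∨
          (r x' (x + M) → f x y ≤ f x' y')) := by
  obtain ⟨a, ha⟩ := hf.exists_eventually_affine
  choose b hb using ha
  obtain ⟨S, hS⟩ : ∃ S, ∀ x ≥ S, ∀ y ∈ Ω, f x y = a 0 * x + b y 0 :=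
    eventually_atTop.1 <| (eventually_all_finset Ω).2 fun y _ => (hb y).mono fun _ hx => hx 0
  obtain ⟨D, hD⟩ := Ω.exists_forall_sub_le fun y => b y 0
  by_cases hα : a 0 = 0
  · refine ⟨S, 0, (· ≤ ·), Or.inl rfl, fun y hy _ _ _ _ _ _ => Or.inl fun x₁ x₂ h₁ h₂ => ?_⟩
    rw [hS x₁ h₁ y hy, hS x₂ h₂ y hy, hα, zero_mul, zero_mul]
  · refine ⟨S, D / a 0, fun u v => a 0 * v ≤ a 0 * u, rel_mul_le_mul_eq_le_or_ge hα,
      fun y hy y' hy' x x' hx hx' => Or.inr fun (hr : a 0 * (x + D / a 0) ≤ a 0 * x') => ?_⟩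
    rw [mul_add, mul_div_cancel₀ _ hα] at hr
    rw [hS x hx y hy, hS x' hx' y' hy']
    linarith [hD y hy y' hy']
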